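/- Fix integers n ≥ 1 and δ ≥ 1, let N = C(δ+n, n) − 1, index coordinates of ℂ^{N+1} by the multi-indices ν ∈ ℕ^{n+1} with |ν| = δ, and define f(z, α) = Σ_{|ν|=δ} α_ν z^ν on ℂ^{n+1} × ℂ^{N+1}, where z^ν = z₀^{ν₀}⋯zₙ^{νₙ}. Let Z = {(z, α) : z ≠ 0, α ≠ 0, f(z, α) = 0} be the cone over the universal hypersurface 𝒳 ⊂ ℙₙ × ℙ_N. Then for every point (z, α) ∈ Z and every pair (u, β) ∈ ℂ^{n+1} × ℂ^{N+1} satisfying df_{(z,α)}(u, β) = Σ_ν β_ν z^ν + Σ_ν α_ν ⟨∇_z(z^ν)(z), u⟩ = 0, the vector (u, β) is a finite complex-linear combination of the Euler vectors (z, 0) and (0, α) together with values at (z, α) of vector fields of the following two forms, each of which is tangent to Z: (A) the field whose only nonzero components are the α_{λ+e_p}-component L(α)·z_q and the α_{λ+e_q}-component −L(α)·z_p, for some λ ∈ ℕ^{n+1} with |λ| = δ−1, some 0 ≤ p ≠ q ≤ n, and some complex-linear function L of α (such fields annihilate f identically); (B) fields of the form Σ_{j=0}^{n} B_j(z) ∂/∂z_j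 + Σ_ν L_ν(α) ∂/∂α_ν, where each B_j is a homogeneous linear function of z₀,…,zₙ and each L_ν is a homogeneous linear function of the α-variables, chosen so that applying the field to f yields a function vanishing identically on Z. -/
import Mathlib


open MvPolynomial

/-!
Low pole-order generation of the tangent bundle of the universal hypersurface.
A homogeneous polynomial P of degree δ in z₀,…,zₙ represents the coefficient
vector α = (α_ν)_{|ν|=δ}, so that f(z, α) = eval z P.  On the cone
Z = {(z, P) : z ≠ 0, P ≠ 0, P homogeneous of degree δ, eval z P = 0} over the
universal hypersurface 𝒳 ⊂ ℙₙ × ℙ_N, every vector (u, β) (β again homogeneous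
of degree δ) annihilated by df at (z, P) is a finite complex-linear
combination of the Euler vectors (z, 0), (0, P) and values at (z, P) of
tangent vector fields of the two stated forms (A) and (B).
-/

private lemma finsupp_degree_eq_sum {m : ℕ} (d : Fin m →₀ ℕ) :
    d.degree = ∑ j, d j := by
  unfold Finsupp.degree
  exact Finset.sum_subset (Finset.subset_univ _)
    (fun i _ hi => Finsupp.notMem_support_iff.mp hi)

private lemma isHom_sum_eq {m δ : ℕ} {φ : MvPolynomial (Fin m) ℂ}
    (h : φ.IsHomogeneous δ) {d : Fin m →₀ ℕ} (hd : coeff d φ ≠ 0) :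
    ∑ j, d j = δ := by
  have h2 := h hd
  rw [← finsupp_degree_eq_sum, Finsupp.degree_eq_weight_one]
  exact h2

private lemma sum_tsub_single {m : ℕ} (v : Fin m →₀ ℕ) (i : Fin m) (hvi : v i ≠ 0) :
    ∑ j, ((v - Finsupp.single i 1 : Fin m →₀ ℕ)) j = (∑ j, v j) - 1 := by
  have e0 : ∀ j : Fin m, ((v - Finsupp.single i 1 : Fin m →₀ ℕ)) j = v j - Finsupp.single i 1 j :=
    fun j => Finsupp.tsub_apply v (Finsupp.single i 1) j
  rw [← Finset.add_sum_erase _ (fun j => ((v - Finsupp.single i 1 : Fin m →₀ ℕ)) j) (Finset.mem_univ i),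
      ← Finset.add_sum_erase _ (fun j => v j) (Finset.mem_univ i)]
  have e1 : ((v - Finsupp.single i 1 : Fin m →₀ ℕ)) i = v i - 1 := by
    rw [e0]; simp
  have e2 : ∀ j ∈ Finset.univ.erase i, ((v - Finsupp.single i 1 : Fin m →₀ ℕ)) j = v j := by
    intro j hj
    have hji : j ≠ i := (Finset.mem_erase.mp hj).1
    rw [e0, Finsupp.single_apply, if_neg (Ne.symm hji), Nat.sub_zero]
  rw [Finset.sum_congr rfl e2, e1]
  have h3 : ∑ x ∈ Finset.univ.erase i, v x = (Finset.univ.erase i).sum ⇑v := rfl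
  omega

private lemma pderiv_isHomogeneous {m δ : ℕ} {Q : MvPolynomial (Fin m) ℂ}
    (h : Q.IsHomogeneous δ) (i : Fin m) :
    (pderiv i Q).IsHomogeneous (δ - 1) := by
  classical
  have hQ : pderiv i Q
      = ∑ v ∈ Q.support, monomial (v - Finsupp.single i 1) (coeff v Q * (v i : ℂ)) := by
    conv_lhs => rw [Q.as_sum]
    rw [map_sum]
    simp only [pderiv_monomial]
  rw [hQ]
  apply IsHomogeneous.sum
  intro v hv
  by_cases hvi : v i = 0
  · rw [hvi]
    simp only [Nat.cast_zero, mul_zero, monomial_zero]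
    exact isHomogeneous_zero _ _ _
  · apply isHomogeneous_monomial
    have hsum : ∑ j, v j = δ := isHom_sum_eq h (mem_support_iff.mp hv)
    rw [finsupp_degree_eq_sum, sum_tsub_single v i hvi, hsum]

theorem universal_hypersurface_tangent_fields_generate
    (n δ : ℕ) (hn : 1 ≤ n) (hδ : 1 ≤ δ)
    (z : Fin (n + 1) → ℂ) (P : MvPolynomial (Fin (n + 1)) ℂ)
    (hz : z ≠ 0) (hP : P ≠ 0) (hPhom : P.IsHomogeneous δ)
    (hPz : eval z P = 0)
    (u : Fin (n + 1) → ℂ) (β : MvPolynomial (Fin (n + 1)) ℂ)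
    (hβhom : β.IsHomogeneous δ)
    -- (u, β) is annihilated by df at (z, P):
    -- Σ_ν β_ν z^ν + Σ_ν α_ν ⟨∇_z(z^ν)(z), u⟩ = 0
    (hdf : eval z β + ∑ j : Fin (n + 1), u j * eval z (pderiv j P) = 0) :
    (u, β) ∈ Submodule.span ℂ (
      -- the two Euler vectors
      ({((z, 0) : (Fin (n + 1) → ℂ) × MvPolynomial (Fin (n + 1)) ℂ), (0, P)} :
        Set ((Fin (n + 1) → ℂ) × MvPolynomial (Fin (n + 1)) ℂ)) ∪
      -- (A) fields with only the α_{λ+e_p}-component L(α)·z_q and the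
      -- α_{λ+e_q}-component −L(α)·z_p nonzero; they annihilate f identically
      {w | ∃ lam : Fin (n + 1) → ℕ, (∑ i, lam i) = δ - 1 ∧
        ∃ p q : Fin (n + 1), p ≠ q ∧
        ∃ L : MvPolynomial (Fin (n + 1)) ℂ →ₗ[ℂ] ℂ,
          w = (0,
            (L P * z q) • monomial ((Finsupp.equivFunOnFinite.symm lam)
                + Finsupp.single p 1) (1 : ℂ)
            - (L P * z p) • monomial ((Finsupp.equivFunOnFinite.symm lam)
                + Finsupp.single q 1) (1 : ℂ))} ∪
      -- (B) fields Σ_j B_j(z) ∂/∂z_j + Σ_ν L_ν(α) ∂/∂α_ν with B_j linear in z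
      -- and L_ν linear in α, whose application to f vanishes identically on Z
      {w | ∃ (B : (Fin (n + 1) → ℂ) →ₗ[ℂ] (Fin (n + 1) → ℂ))
             (Λ : MvPolynomial (Fin (n + 1)) ℂ →ₗ[ℂ] MvPolynomial (Fin (n + 1)) ℂ),
          (∀ Q : MvPolynomial (Fin (n + 1)) ℂ, Q.IsHomogeneous δ →
            (Λ Q).IsHomogeneous δ) ∧
          (∀ (w' : Fin (n + 1) → ℂ) (Q : MvPolynomial (Fin (n + 1)) ℂ),
            w' ≠ 0 → Q ≠ 0 → Q.IsHomogeneous δ → eval w' Q = 0 →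
            eval w' (Λ Q) + ∑ j : Fin (n + 1), (B w') j * eval w' (pderiv j Q) = 0) ∧
          w = (B z, Λ P)}) := by
  classical
  -- pick a coordinate where z is nonzero
  obtain ⟨k, hk⟩ : ∃ k, z k ≠ 0 := by
    by_contra h
    push_neg at h
    exact hz (funext fun i => h i)
  -- a linear functional with L P = 1
  obtain ⟨L, hLc⟩ := LinearMap.exists_extend
    ((LinearEquiv.coord ℂ (MvPolynomial (Fin (n + 1)) ℂ) P hP).toLinearMap)
  have hL : L P = 1 := by
    have h1 := LinearMap.congr_fun hLc ⟨P, Submodule.mem_span_singleton_self P⟩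
    simp only [LinearMap.coe_comp, Function.comp_apply, Submodule.coe_subtype,
      LinearEquiv.coe_coe] at h1
    rw [LinearEquiv.coord_self] at h1
    exact h1
  -- the linear vector field in the z-directions and its compensating Λ
  set B : (Fin (n + 1) → ℂ) →ₗ[ℂ] (Fin (n + 1) → ℂ) :=
    LinearMap.smulRight (LinearMap.proj k) ((z k)⁻¹ • u) with hB
  set Λ : MvPolynomial (Fin (n + 1)) ℂ →ₗ[ℂ] MvPolynomial (Fin (n + 1)) ℂ :=
    -∑ j : Fin (n + 1), (LinearMap.mulLeft ℂ (C (u j * (z k)⁻¹) * X k)).comp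
      (pderiv j).toLinearMap with hΛ
  have hΛapp : ∀ Q : MvPolynomial (Fin (n + 1)) ℂ,
      Λ Q = -∑ j : Fin (n + 1), (C (u j * (z k)⁻¹) * X k) * pderiv j Q := by
    intro Q
    rw [hΛ]
    simp [LinearMap.sum_apply]
    exact Finset.sum_congr rfl fun j _ => by ring
  have hBapp : ∀ (w' : Fin (n + 1) → ℂ) (j : Fin (n + 1)),
      (B w') j = w' k * ((z k)⁻¹ * u j) := by
    intro w' j
    rw [hB]
    simp [LinearMap.smulRight_apply]
  have hBz : B z = u := by
    funext j
    rw [hBapp]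
    field_simp
  have hΛhom : ∀ Q : MvPolynomial (Fin (n + 1)) ℂ, Q.IsHomogeneous δ →
      (Λ Q).IsHomogeneous δ := by
    intro Q hQ
    rw [hΛapp Q, ← mem_homogeneousSubmodule]
    refine Submodule.neg_mem _ (Submodule.sum_mem _ fun j _ => ?_)
    rw [mem_homogeneousSubmodule]
    have h1 : (C (u j * (z k)⁻¹) * X k : MvPolynomial (Fin (n + 1)) ℂ).IsHomogeneous 1 :=
      isHomogeneous_C_mul_X _ _
    have h3 := h1.mul (pderiv_isHomogeneous hQ j)
    rwa [show 1 + (δ - 1) = δ by omega] at h3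
  have hBtan : ∀ (w' : Fin (n + 1) → ℂ) (Q : MvPolynomial (Fin (n + 1)) ℂ),
      eval w' (Λ Q) + ∑ j : Fin (n + 1), (B w') j * eval w' (pderiv j Q) = 0 := by
    intro w' Q
    rw [hΛapp, map_neg, map_sum, neg_add_eq_zero]
    refine Finset.sum_congr rfl fun j _ => ?_
    rw [hBapp]
    simp only [eval_mul, eval_C, eval_X]
    ring
  have hΛPz : eval z (Λ P) = -∑ j : Fin (n + 1), u j * eval z (pderiv j P) := by
    rw [hΛapp, map_neg, map_sum]
    congr 1
    refine Finset.sum_congr rfl fun j _ => ?_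
    simp only [eval_mul, eval_C, eval_X]
    field_simp
  -- the generator set for the (A)-directions
  set G : Set (MvPolynomial (Fin (n + 1)) ℂ) :=
    {g | ∃ lam : Fin (n + 1) → ℕ, (∑ i, lam i) = δ - 1 ∧
      ∃ p q : Fin (n + 1), p ≠ q ∧
      g = z q • monomial ((Finsupp.equivFunOnFinite.symm lam) + Finsupp.single p 1) (1 : ℂ)
        - z p • monomial ((Finsupp.equivFunOnFinite.symm lam) + Finsupp.single q 1) (1 : ℂ)}
    with hG
  have cmul : ∀ (l : Fin (n + 1) →₀ ℕ) (q : Fin (n + 1)),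
      eval z (monomial (l + Finsupp.single q 1) (1 : ℂ)) = eval z (monomial l 1) * z q := by
    intro l q
    have h1 : monomial (l + Finsupp.single q 1) (1 : ℂ)
        = monomial l 1 * monomial (Finsupp.single q 1) 1 := by
      rw [monomial_mul, one_mul]
    rw [h1, map_mul]
    congr 1
    simp [eval_monomial]
  have claim : ∀ m : ℕ, ∀ ν : Fin (n + 1) →₀ ℕ, (∑ j, ν j) = δ →
      (∑ j ∈ Finset.univ.erase k, ν j) = m →
      monomial ν (1 : ℂ) - (eval z (monomial ν 1) * ((z k) ^ δ)⁻¹) •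
        monomial (Finsupp.single k δ) (1 : ℂ) ∈ Submodule.span ℂ G := by
    intro m
    induction m with
    | zero =>
      intro ν hν hm
      have hz0 : ∀ j ∈ Finset.univ.erase k, ν j = 0 := Finset.sum_eq_zero_iff.mp hm
      have hνk : ν k = δ := by
        rw [← Finset.add_sum_erase _ (fun j => ν j) (Finset.mem_univ k)] at hν
        omega
      have hνe : ν = Finsupp.single k δ := by
        ext j
        rcases eq_or_ne j k with rfl | hj
        · simp [hνk]
        · rw [hz0 j (Finset.mem_erase.mpr ⟨hj, Finset.mem_univ j⟩),
            Finsupp.single_apply, if_neg (Ne.symm hj)]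
      rw [hνe]
      have he : eval z (monomial (Finsupp.single k δ) (1 : ℂ)) = z k ^ δ := by
        simp [eval_monomial]
      rw [he, mul_inv_cancel₀ (pow_ne_zero _ hk), one_smul, sub_self]
      exact Submodule.zero_mem _
    | succ m ih =>
      intro ν hν hm
      obtain ⟨p, hp, hpne⟩ : ∃ p ∈ Finset.univ.erase k, ν p ≠ 0 := by
        by_contra h
        push_neg at h
        rw [Finset.sum_eq_zero h] at hm
        omega
      have hpk : p ≠ k := (Finset.mem_erase.mp hp).1
      have hadd : (ν - Finsupp.single p 1) + Finsupp.single p 1 = ν := by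
        ext j
        rcases eq_or_ne j p with rfl | hj
        · simp only [Finsupp.add_apply, Finsupp.tsub_apply, Finsupp.single_eq_same]
          omega
        · simp only [Finsupp.add_apply, Finsupp.tsub_apply,
            Finsupp.single_apply, if_neg (Ne.symm hj), Nat.sub_zero, add_zero]
      have hsl : ∑ j, (ν - Finsupp.single p 1 : Fin (n + 1) →₀ ℕ) j = δ - 1 := by
        rw [sum_tsub_single ν p hpne, hν]
      have hν'sum : ∑ j, ((ν - Finsupp.single p 1) + Finsupp.single k 1 : Fin (n + 1) →₀ ℕ) j
          = δ := by
        simp only [Finsupp.add_apply, Finset.sum_add_distrib, hsl]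
        have : ∑ j : Fin (n + 1), (Finsupp.single k 1 : Fin (n + 1) →₀ ℕ) j = 1 := by
          simp [Finsupp.single_apply]
        rw [this]
        omega
      have hν'er : ∑ j ∈ Finset.univ.erase k,
          ((ν - Finsupp.single p 1) + Finsupp.single k 1 : Fin (n + 1) →₀ ℕ) j = m := by
        have h1 : ∀ j ∈ Finset.univ.erase k,
            ((ν - Finsupp.single p 1) + Finsupp.single k 1 : Fin (n + 1) →₀ ℕ) j
              = (ν - Finsupp.single p 1 : Fin (n + 1) →₀ ℕ) j := by
          intro j hj
          rw [Finsupp.add_apply, Finsupp.single_apply,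
            if_neg ((Finset.mem_erase.mp hj).1.symm), add_zero]
        rw [Finset.sum_congr rfl h1]
        rw [← Finset.add_sum_erase _ _ hp]
        rw [← Finset.add_sum_erase _ (fun j => ν j) hp] at hm
        have h2 : ∀ j ∈ (Finset.univ.erase k).erase p,
            (ν - Finsupp.single p 1 : Fin (n + 1) →₀ ℕ) j = ν j := by
          intro j hj
          rw [Finsupp.tsub_apply, Finsupp.single_apply,
            if_neg (Ne.symm (Finset.mem_erase.mp hj).1), Nat.sub_zero]
        rw [Finset.sum_congr rfl h2]
        have h3 : (ν - Finsupp.single p 1 : Fin (n + 1) →₀ ℕ) p = ν p - 1 := by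
          simp [Finsupp.tsub_apply]
        have h4 : ∑ x ∈ (Finset.univ.erase k).erase p, ν x
            = ((Finset.univ.erase k).erase p).sum ⇑ν := rfl
        omega
      have IH := ih ((ν - Finsupp.single p 1) + Finsupp.single k 1) hν'sum hν'er
      have hg : (z k • monomial ((ν - Finsupp.single p 1) + Finsupp.single p 1) (1 : ℂ)
          - z p • monomial ((ν - Finsupp.single p 1) + Finsupp.single k 1) (1 : ℂ)) ∈ G := by
        rw [hG]
        refine ⟨Finsupp.equivFunOnFinite (ν - Finsupp.single p 1), ?_, p, k, hpk, ?_⟩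
        · exact hsl
        · rw [Equiv.symm_apply_apply]
      have hgmem := Submodule.subset_span (R := ℂ) hg
      have hc1 : eval z (monomial ν (1 : ℂ))
          = eval z (monomial (ν - Finsupp.single p 1) 1) * z p := by
        conv_lhs => rw [← hadd]
        exact cmul _ _
      have hc2 : eval z (monomial ((ν - Finsupp.single p 1) + Finsupp.single k 1) (1 : ℂ))
          = eval z (monomial (ν - Finsupp.single p 1) 1) * z k := cmul _ _
      have key : monomial ν (1 : ℂ) - (eval z (monomial ν 1) * ((z k) ^ δ)⁻¹) •
            monomial (Finsupp.single k δ) (1 : ℂ)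
          = (z k)⁻¹ • (z k • monomial ((ν - Finsupp.single p 1) + Finsupp.single p 1) (1 : ℂ)
              - z p • monomial ((ν - Finsupp.single p 1) + Finsupp.single k 1) (1 : ℂ))
            + (z p * (z k)⁻¹) •
              (monomial ((ν - Finsupp.single p 1) + Finsupp.single k 1) (1 : ℂ)
                - (eval z (monomial ((ν - Finsupp.single p 1) + Finsupp.single k 1) 1)
                    * ((z k) ^ δ)⁻¹) • monomial (Finsupp.single k δ) (1 : ℂ)) := by
        rw [hc1, hc2, hadd]
        match_scalars <;> field_simp <;> try ring
      rw [key]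
      exact Submodule.add_mem _ (Submodule.smul_mem _ _ hgmem) (Submodule.smul_mem _ _ IH)
  -- the residual coefficient direction γ
  set γ : MvPolynomial (Fin (n + 1)) ℂ := β - Λ P with hγdef
  have hγhom : γ.IsHomogeneous δ := hβhom.sub (hΛhom P hPhom)
  have hγz : eval z γ = 0 := by
    rw [hγdef, map_sub, hΛPz, sub_neg_eq_add]
    exact hdf
  have hγspan : γ ∈ Submodule.span ℂ G := by
    have h0 : ∑ v ∈ γ.support, coeff v γ * eval z (monomial v 1) = eval z γ := by
      conv_rhs => rw [γ.as_sum, map_sum]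
      refine Finset.sum_congr rfl fun v _ => ?_
      rw [eval_monomial, eval_monomial, one_mul]
    have hrep : γ = ∑ v ∈ γ.support, (coeff v γ) •
        (monomial v (1 : ℂ) - (eval z (monomial v 1) * ((z k) ^ δ)⁻¹) •
          monomial (Finsupp.single k δ) (1 : ℂ)) := by
      simp only [smul_sub, Finset.sum_sub_distrib, smul_smul]
      rw [← Finset.sum_smul]
      have h1 : ∑ v ∈ γ.support, coeff v γ * (eval z (monomial v 1) * ((z k) ^ δ)⁻¹) = 0 := by
        calc ∑ v ∈ γ.support, coeff v γ * (eval z (monomial v 1) * ((z k) ^ δ)⁻¹)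
            = (∑ v ∈ γ.support, coeff v γ * eval z (monomial v 1)) * ((z k) ^ δ)⁻¹ := by
              rw [Finset.sum_mul]
              exact Finset.sum_congr rfl fun v _ => by ring
          _ = 0 := by rw [h0, hγz, zero_mul]
      rw [h1, zero_smul, sub_zero]
      conv_lhs => rw [γ.as_sum]
      exact Finset.sum_congr rfl fun v _ => by rw [smul_monomial, smul_eq_mul, mul_one]
    rw [hrep]
    exact Submodule.sum_mem _ fun v hv => Submodule.smul_mem _ _
      (claim _ v (isHom_sum_eq hγhom (mem_support_iff.mp hv)) rfl)
  -- assemble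
  have hfinal : (u, β) = ((u, Λ P) : (Fin (n + 1) → ℂ) × MvPolynomial (Fin (n + 1)) ℂ)
      + ((0 : Fin (n + 1) → ℂ), γ) := by
    rw [Prod.mk_add_mk, hγdef, add_zero]
    congr 1
    ring
  rw [hfinal]
  refine Submodule.add_mem _ ?_ ?_
  · exact Submodule.subset_span (Or.inr
      ⟨B, Λ, hΛhom, fun w' Q _ _ _ _ => hBtan w' Q, by rw [hBz]⟩)
  · have hmem : (LinearMap.inr ℂ (Fin (n + 1) → ℂ) (MvPolynomial (Fin (n + 1)) ℂ)) γ
        ∈ (Submodule.span ℂ G).map (LinearMap.inr ℂ _ _) := Submodule.mem_map_of_mem hγspan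
    rw [Submodule.map_span] at hmem
    have himg : (LinearMap.inr ℂ (Fin (n + 1) → ℂ) (MvPolynomial (Fin (n + 1)) ℂ)) '' G ⊆
        (({((z, 0) : (Fin (n + 1) → ℂ) × MvPolynomial (Fin (n + 1)) ℂ), (0, P)} :
          Set ((Fin (n + 1) → ℂ) × MvPolynomial (Fin (n + 1)) ℂ)) ∪
        {w | ∃ lam : Fin (n + 1) → ℕ, (∑ i, lam i) = δ - 1 ∧
          ∃ p q : Fin (n + 1), p ≠ q ∧
          ∃ L : MvPolynomial (Fin (n + 1)) ℂ →ₗ[ℂ] ℂ,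
            w = (0,
              (L P * z q) • monomial ((Finsupp.equivFunOnFinite.symm lam)
                  + Finsupp.single p 1) (1 : ℂ)
              - (L P * z p) • monomial ((Finsupp.equivFunOnFinite.symm lam)
                  + Finsupp.single q 1) (1 : ℂ))} ∪
        {w | ∃ (B : (Fin (n + 1) → ℂ) →ₗ[ℂ] (Fin (n + 1) → ℂ))
               (Λ : MvPolynomial (Fin (n + 1)) ℂ →ₗ[ℂ] MvPolynomial (Fin (n + 1)) ℂ),
            (∀ Q : MvPolynomial (Fin (n + 1)) ℂ, Q.IsHomogeneous δ →
              (Λ Q).IsHomogeneous δ) ∧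
            (∀ (w' : Fin (n + 1) → ℂ) (Q : MvPolynomial (Fin (n + 1)) ℂ),
              w' ≠ 0 → Q ≠ 0 → Q.IsHomogeneous δ → eval w' Q = 0 →
              eval w' (Λ Q) + ∑ j : Fin (n + 1), (B w') j * eval w' (pderiv j Q) = 0) ∧
            w = (B z, Λ P)}) := by
      rintro _ ⟨g, ⟨lam, hlam, p, q, hpq, rfl⟩, rfl⟩
      refine Or.inl (Or.inr ⟨lam, hlam, p, q, hpq, L, ?_⟩)
      rw [hL, one_mul, one_mul]
      rfl
    have hle := Submodule.span_mono (R := ℂ) himg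
    have hfin := hle hmem
    rwa [show (LinearMap.inr ℂ (Fin (n + 1) → ℂ) (MvPolynomial (Fin (n + 1)) ℂ)) γ
      = ((0 : Fin (n + 1) → ℂ), γ) from rfl] at hfin
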